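/- Let S be a restriction semigroup with local units and define, for each s ∈ S, the set ι(s) = {(s, φ) germ class : φ(s*) = 1} via the germ equivalence (s,φ) ∼ (t,φ) iff there is u ≤ s,t with φ(u*) = 1. Then the map s ↦ ι(s) is injective: if for every character φ with φ(s*) = 1 = φ(t*) the pairs (s,φ) and (t,φ) are germ-equivalent and D_{s*} = D_{t*}, then s = t. In particular, evaluating at the principal-filter character χ_{(s*)↑} shows s ≤ t and t ≤ s. -/

import Mathlib

/-- A restriction semigroup: an Ehresmann semigroup (a semigroup with a unary
operation `rstar` satisfying `x x* = x`, `x* y* = y* x* = (x* y*)*`, `(xy)* = (x* y)*`)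
which additionally satisfies the identity `x* y = y (xy)*`. -/
class RestrictionSemigroup (S : Type*) extends Semigroup S where
  rstar : S → S
  mul_rstar_self : ∀ x : S, x * rstar x = x
  rstar_comm : ∀ x y : S, rstar x * rstar y = rstar y * rstar x
  rstar_mul_proj : ∀ x y : S, rstar x * rstar y = rstar (rstar x * rstar y)
  rstar_mul : ∀ x y : S, rstar (x * y) = rstar (rstar x * y)
  restriction : ∀ x y : S, rstar x * y = y * rstar (x * y)

open RestrictionSemigroup

variable {S : Type*} [RestrictionSemigroup S]

/-- The natural partial order: `s ≤ t` iff `s = t s*`. -/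
def rle (s t : S) : Prop := s = t * rstar s

/-- A character of the projection semilattice `P(S)` of `S`: a nonzero
(`Prop`-valued) meet-semilattice morphism on the projections. -/
def IsProjChar (φ : S → Prop) : Prop :=
  (∃ e : S, rstar e = e ∧ φ e) ∧
  ∀ e f : S, rstar e = e → rstar f = f → (φ (e * f) ↔ φ e ∧ φ f)

namespace RestrictionSemigroup

lemma rstar_mul_rstar (x : S) : rstar x * rstar x = rstar x := by
  have h := rstar_mul x (rstar x)
  rw [mul_rstar_self] at h
  rw [rstar_mul_proj, ← h]

lemma rstar_rstar (x : S) : rstar (rstar x) = rstar x := by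
  conv_lhs => rw [← rstar_mul_rstar x]
  rw [← rstar_mul_proj, rstar_mul_rstar]

lemma mul_self_of_rstar_eq {e : S} (he : rstar e = e) : e * e = e := by
  rw [← he, rstar_mul_rstar]

lemma mul_comm_of_rstar_eq {e f : S} (he : rstar e = e) (hf : rstar f = f) : e * f = f * e := by
  rw [← he, ← hf, rstar_comm]

/-- The principal-filter character `χ_{p↑}` of a projection `p`. -/
lemma isProjChar_principal {p : S} (hp : rstar p = p) : IsProjChar (fun a : S => p * a = p) := by
  refine ⟨⟨p, hp, mul_self_of_rstar_eq hp⟩, fun e f he hf => ⟨fun h => ⟨?_, ?_⟩, ?_⟩⟩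
  · show p * e = p
    rw [mul_comm_of_rstar_eq he hf] at h
    calc p * e = p * (f * e) * e := by rw [h]
      _ = p * (f * e) := by rw [mul_assoc, mul_assoc, mul_self_of_rstar_eq he]
      _ = p := h
  · show p * f = p
    calc p * f = p * (e * f) * f := by rw [h]
      _ = p * (e * f) := by rw [mul_assoc, mul_assoc, mul_self_of_rstar_eq hf]
      _ = p := h
  · rintro ⟨h₁, h₂⟩
    show p * (e * f) = p
    rw [← mul_assoc, h₁, h₂]

lemma rle_antisymm {s t : S} (hst : rle s t) (hts : rle t s) : s = t := by
  unfold rle at hst hts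
  symm
  calc t = s * rstar t := hts
    _ = t * rstar s * rstar t := by rw [← hst]
    _ = t * rstar t * rstar s := by rw [mul_assoc, rstar_comm, ← mul_assoc]
    _ = s := by rw [mul_rstar_self, ← hst]

lemma eq_of_rle_of_rstar_mul_rstar {u s : S} (hus : rle u s) (h : rstar s * rstar u = rstar s) :
    s = u :=
  calc s = s * rstar s := (mul_rstar_self s).symm
    _ = s * rstar u := by rw [← h, ← mul_assoc, mul_rstar_self]
    _ = u := hus.symm

/-- `hst` says the principal character of `s*` is `1` at `t*`; the germ it provides is `s` itself. -/
lemma rle_of_germ {s t : S} (hst : rstar s * rstar t = rstar s)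
    (hgerm : ∀ φ : S → Prop, IsProjChar φ → φ (rstar s) → φ (rstar t) →
      ∃ u : S, rle u s ∧ rle u t ∧ φ (rstar u)) :
    rle s t := by
  obtain ⟨u, hus, hut, hu⟩ :=
    hgerm _ (isProjChar_principal (rstar_rstar s)) (rstar_mul_rstar s) hst
  rwa [eq_of_rle_of_rstar_mul_rstar hus hu]

end RestrictionSemigroup

theorem stmt17_general
    (s t : S)
    (hD : ∀ φ : S → Prop, IsProjChar φ → (φ (rstar s) ↔ φ (rstar t)))
    (hgerm : ∀ φ : S → Prop, IsProjChar φ → φ (rstar s) → φ (rstar t) →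
      ∃ u : S, rle u s ∧ rle u t ∧ φ (rstar u)) :
    s = t := by
  have hst : rstar s * rstar t = rstar s :=
    (hD _ (isProjChar_principal (rstar_rstar s))).1 (rstar_mul_rstar s)
  have hts : rstar t * rstar s = rstar t :=
    (hD _ (isProjChar_principal (rstar_rstar t))).2 (rstar_mul_rstar t)
  refine rle_antisymm (rle_of_germ hst hgerm) (rle_of_germ hts fun φ hφ ht hs => ?_)
  obtain ⟨u, hus, hut, hu⟩ := hgerm φ hφ hs ht
  exact ⟨u, hut, hus, hu⟩

/-- Injectivity of `ι : s ↦ (s, D_{s*})` into germs: if `S` is a restriction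
semigroup with local units, `D_{s*} = D_{t*}`, and for every character `φ` with
`φ(s*) = 1 = φ(t*)` the pairs `(s, φ)` and `(t, φ)` are germ-equivalent (there
is `u ≤ s, t` with `φ(u*) = 1`), then `s = t`. -/
theorem stmt17
    (hlu : ∀ s : S, ∃ e f : S, rstar e = e ∧ rstar f = f ∧ e * s = s ∧ s * f = s)
    (s t : S)
    (hD : ∀ φ : S → Prop, IsProjChar φ → (φ (rstar s) ↔ φ (rstar t)))
    (hgerm : ∀ φ : S → Prop, IsProjChar φ → φ (rstar s) → φ (rstar t) →
      ∃ u : S, rle u s ∧ rle u t ∧ φ (rstar u)) :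
    s = t :=
  stmt17_general s t hD hgerm
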